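/- Let N be Hurwitz, P ≻ 0, and suppose the block matrix [[NᵀP + PN, −P M D_a, C̄_aᵀ],[−(M D_a)ᵀP, −λI, 0],[C̄_a, 0, −λI]] is negative definite for some λ > 0. Then for every frequency μ ∈ ℝ, the matrix T(iμ) := −C̄_a (iμ I − N)⁻¹ M D_a satisfies σ_max(T(iμ)) < λ. -/

import Mathlib

/-!
For `s = iμ` outside the spectrum of `N`, put `x = (N - s)⁻¹ B u`, so that `N x = s x + B u` and
`C x = T(s) u`. Evaluating the negative definite quadratic form at `(x, u, C x / λ)`, the term
`x* (Nᴴ P + P N) x` reduces to `2 Re (x* P B u)` because `s + s̄ = 0`; this cancels the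
off-diagonal terms and leaves `|C x|² / λ - λ |u|² < 0`, i.e. `|T(iμ) u| < λ |u|` for `u ≠ 0`.
Compactness of the unit ball turns this into the strict bound on the operator norm. The real LMI
is first complexified: for `z = a + i b` and real symmetric `A`, `z* A z = aᵀ A a + bᵀ A b`.
-/

open Matrix

/-- The spectral norm (largest singular value) of a complex matrix, as the Euclidean
operator norm. -/
noncomputable def specNormC {a b : ℕ} (A : Matrix (Fin a) (Fin b) ℂ) : ℝ :=
  ‖(Matrix.toEuclideanLin A).toContinuousLinearMap‖

open scoped ComplexOrder

open Metric in
theorem ContinuousLinearMap.opNorm_lt_of_forall_norm_apply_lt {𝕜 E F : Type*}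
    [DenselyNormedField 𝕜] [NormedAddCommGroup E] [NormedSpace 𝕜 E] [ProperSpace E]
    [SeminormedAddCommGroup F] [NormedSpace 𝕜 F] (f : E →L[𝕜] F) {c : ℝ} (hc : 0 < c)
    (h : ∀ u, u ≠ 0 → ‖f u‖ < c * ‖u‖) : ‖f‖ < c := by
  obtain ⟨u, hu, hfu⟩ := ((isCompact_closedBall (0 : E) 1).image f.continuous.norm).sSup_mem
    ((nonempty_closedBall.2 zero_le_one).image _)
  rw [f.sSup_unitClosedBall_eq_norm] at hfu
  rw [← hfu]
  rcases eq_or_ne u 0 with rfl | hu0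
  · simpa using hc
  · calc ‖f u‖ < c * ‖u‖ := h u hu0
      _ ≤ c * 1 := by gcongr; simpa using hu
      _ = c := mul_one c

theorem EuclideanSpace.star_dotProduct_self {𝕜 ι : Type*} [RCLike 𝕜] [Fintype ι] (v : ι → 𝕜) :
    star v ⬝ᵥ v = (‖WithLp.toLp 2 v‖ : 𝕜) ^ 2 := by
  rw [dotProduct_comm, ← inner_toLp_toLp, inner_self_eq_norm_sq_to_K]

namespace Matrix

theorem re_star_dotProduct_map_ofReal_mulVec {m : Type*} [Fintype m]
    (A : Matrix m m ℝ) (z : m → ℂ) :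
    (star z ⬝ᵥ A.map (Complex.ofReal ·) *ᵥ z).re =
      (fun i ↦ (z i).re) ⬝ᵥ A *ᵥ (fun i ↦ (z i).re) +
        (fun i ↦ (z i).im) ⬝ᵥ A *ᵥ (fun i ↦ (z i).im) := by
  simp only [dotProduct, mulVec, Complex.re_sum, Finset.mul_sum, ← Finset.sum_add_distrib]
  refine Finset.sum_congr rfl fun i _ ↦ Finset.sum_congr rfl fun j _ ↦ ?_
  simp [Complex.mul_re]

theorem PosDef.map_ofReal {m : Type*} [Fintype m] {A : Matrix m m ℝ} (hA : A.PosDef) :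
    (A.map (Complex.ofReal ·)).PosDef := by
  have hherm : (A.map (Complex.ofReal ·)).IsHermitian :=
    hA.isHermitian.map _ fun _ ↦ (Complex.conj_ofReal _).symm
  refine posDef_iff_dotProduct_mulVec.2 ⟨hherm, fun z hz ↦ ?_⟩
  refine Complex.lt_def.2 ⟨?_, (hherm.im_star_dotProduct_mulVec_self z).symm⟩
  rw [Complex.zero_re, re_star_dotProduct_map_ofReal_mulVec]
  have hpos : ∀ v : m → ℝ, v ≠ 0 → 0 < v ⬝ᵥ A *ᵥ v := fun v hv ↦ by
    simpa using hA.dotProduct_mulVec_pos hv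
  have hnonneg : ∀ v : m → ℝ, 0 ≤ v ⬝ᵥ A *ᵥ v := by
    simpa using hA.posSemidef.dotProduct_mulVec_nonneg
  obtain hre | him : (fun i ↦ (z i).re) ≠ 0 ∨ (fun i ↦ (z i).im) ≠ 0 := by
    contrapose! hz
    exact funext fun i ↦ Complex.ext (congrFun hz.1 i) (congrFun hz.2 i)
  · linarith [hpos _ hre, hnonneg fun i ↦ (z i).im]
  · linarith [hpos _ him, hnonneg fun i ↦ (z i).re]

theorem star_dotProduct_conjTranspose_mulVec {R m n : Type*} [CommRing R] [StarRing R]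
    [Fintype m] [Fintype n] (A : Matrix m n R) (x : n → R) (y : m → R) :
    star x ⬝ᵥ Aᴴ *ᵥ y = star (A *ᵥ x) ⬝ᵥ y := by
  rw [dotProduct_mulVec, star_mulVec]

theorem star_dotProduct_lyapunov_mulVec {R n : Type*} [CommRing R] [StarRing R] [Fintype n]
    {N : Matrix n n R} (P : Matrix n n R) {s : R} (hs : star s = -s) {x v : n → R}
    (hx : N *ᵥ x = s • x + v) :
    star x ⬝ᵥ (Nᴴ * P + P * N) *ᵥ x = star v ⬝ᵥ P *ᵥ x + star x ⬝ᵥ P *ᵥ v := by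
  rw [add_mulVec, dotProduct_add, ← mulVec_mulVec, ← mulVec_mulVec,
    star_dotProduct_conjTranspose_mulVec, hx, star_add, star_smul, hs, mulVec_add, mulVec_smul,
    add_dotProduct, dotProduct_add, neg_smul, neg_dotProduct, smul_dotProduct, dotProduct_smul,
    smul_eq_mul]
  ring

end Matrix

section BoundedReal

variable {R : Type*} [CommRing R] [StarRing R] {n p q : Type*} [Fintype n]
  [DecidableEq p] [DecidableEq q]

/-- `[[Nᴴ P + P N, -P B, Cᴴ], [-(P B)ᴴ, -λ I, 0], [C, 0, -λ I]]`. -/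
def boundedRealMatrix (N P : Matrix n n R) (B : Matrix n p R) (C : Matrix q n R) (lam : R) :
    Matrix ((n ⊕ p) ⊕ q) ((n ⊕ p) ⊕ q) R :=
  fromBlocks (fromBlocks (Nᴴ * P + P * N) (-(P * B)) (-(P * B))ᴴ (-(lam • 1)))
    (fromRows Cᴴ 0) (fromCols C 0) (-(lam • 1))

theorem boundedRealMatrix_map {S : Type*} [CommRing S] [StarRing S] (f : R →+* S)
    (hf : Function.Semiconj f star star)
    (N P : Matrix n n R) (B : Matrix n p R) (C : Matrix q n R) (lam : R) :
    (boundedRealMatrix N P B C lam).map f =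
      boundedRealMatrix (N.map f) (P.map f) (B.map f) (C.map f) (f lam) := by
  simp only [boundedRealMatrix, fromBlocks_map, fromRows_map, fromCols_map,
    Matrix.map_add f (map_add f), Matrix.map_neg f (map_neg f), Matrix.map_mul,
    Matrix.map_smul' f _ _ (map_mul f), Matrix.map_one f (map_zero f) (map_one f),
    Matrix.map_zero f (map_zero f), conjTranspose_map f hf]

variable [Fintype p] [Fintype q]

theorem star_dotProduct_boundedRealMatrix_mulVec (N P : Matrix n n R) (B : Matrix n p R)
    (C : Matrix q n R) (lam : R) (x : n → R) (u : p → R) (y : q → R) :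
    star (Sum.elim (Sum.elim x u) y) ⬝ᵥ
        boundedRealMatrix N P B C lam *ᵥ Sum.elim (Sum.elim x u) y =
      star x ⬝ᵥ (Nᴴ * P + P * N) *ᵥ x - (star x ⬝ᵥ (P * B) *ᵥ u + star u ⬝ᵥ (P * B)ᴴ *ᵥ x)
        + (star x ⬝ᵥ Cᴴ *ᵥ y + star y ⬝ᵥ C *ᵥ x) - lam * (star u ⬝ᵥ u + star y ⬝ᵥ y) := by
  simp only [boundedRealMatrix, fromBlocks_mulVec, fromRows_mulVec, fromCols_mulVec_sumElim,
    Sum.elim_comp_inl, Sum.elim_comp_inr, Function.star_sumElim, Sum.elim_add_add,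
    sumElim_dotProduct_sumElim, dotProduct_add, zero_mulVec, add_zero, neg_mulVec, smul_mulVec,
    one_mulVec, dotProduct_neg, dotProduct_smul, smul_eq_mul, conjTranspose_neg, dotProduct_zero]
  ring

theorem star_dotProduct_boundedRealMatrix_mulVec_of_mulVec_eq {F : Type*} [Field F] [StarRing F]
    {N P : Matrix n n F} {B : Matrix n p F} (C : Matrix q n F)
    {lam s : F} (hP : Pᴴ = P) (hlam : star lam = lam) (hlam0 : lam ≠ 0) (hs : star s = -s)
    {x : n → F} {u : p → F} (hx : N *ᵥ x = s • x + B *ᵥ u) :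
    star (Sum.elim (Sum.elim x u) (lam⁻¹ • C *ᵥ x)) ⬝ᵥ
        boundedRealMatrix N P B C lam *ᵥ Sum.elim (Sum.elim x u) (lam⁻¹ • C *ᵥ x) =
      lam⁻¹ * (star (C *ᵥ x) ⬝ᵥ C *ᵥ x) - lam * (star u ⬝ᵥ u) := by
  rw [star_dotProduct_boundedRealMatrix_mulVec, star_dotProduct_lyapunov_mulVec P hs hx,
    ← mulVec_mulVec, conjTranspose_mul, hP, ← mulVec_mulVec, star_dotProduct_conjTranspose_mulVec,
    star_dotProduct_conjTranspose_mulVec, star_smul, star_inv₀, hlam, dotProduct_smul,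
    smul_dotProduct, smul_dotProduct, dotProduct_smul, smul_eq_mul]
  linear_combination (-(lam⁻¹ * star (C *ᵥ x) ⬝ᵥ C *ᵥ x)) * mul_inv_cancel₀ hlam0

variable [DecidableEq n]

noncomputable def transferMatrix (N : Matrix n n ℂ) (B : Matrix n p ℂ) (C : Matrix q n ℂ)
    (s : ℂ) : Matrix q p ℂ :=
  -C * (s • 1 - N)⁻¹ * B

theorem norm_transferMatrix_mulVec_lt {N P : Matrix n n ℂ} {B : Matrix n p ℂ}
    {C : Matrix q n ℂ} {lam : ℝ} (hP : Pᴴ = P) (hlam : 0 < lam)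
    (hLMI : (-boundedRealMatrix N P B C (lam : ℂ)).PosDef) {s : ℂ} (hs : star s = -s)
    (hsN : s ∉ spectrum ℂ N) {u : p → ℂ} (hu : u ≠ 0) :
    ‖WithLp.toLp 2 (transferMatrix N B C s *ᵥ u)‖ < lam * ‖WithLp.toLp 2 u‖ := by
  have hdet : IsUnit (s • 1 - N).det := by
    rwa [spectrum.notMem_iff, Algebra.algebraMap_eq_smul_one, isUnit_iff_isUnit_det] at hsN
  set x := -((s • 1 - N)⁻¹ *ᵥ B *ᵥ u)
  have hx : N *ᵥ x = s • x + B *ᵥ u := by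
    have : (s • 1 - N) *ᵥ x = -(B *ᵥ u) := by
      rw [mulVec_neg, mulVec_mulVec, mul_nonsing_inv _ hdet, one_mulVec]
    rw [sub_mulVec, smul_mulVec, one_mulVec] at this
    linear_combination (norm := module) -this
  have hTu : transferMatrix N B C s *ᵥ u = C *ᵥ x := by
    rw [transferMatrix, ← mulVec_mulVec, ← mulVec_mulVec, neg_mulVec, mulVec_neg]
  have hz : Sum.elim (Sum.elim x u) ((lam : ℂ)⁻¹ • C *ᵥ x) ≠ 0 := fun h ↦
    hu (funext fun i ↦ congrFun h (Sum.inl (Sum.inr i)))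
  have hpos := hLMI.dotProduct_mulVec_pos hz
  rw [neg_mulVec, dotProduct_neg, neg_pos,
    star_dotProduct_boundedRealMatrix_mulVec_of_mulVec_eq C hP (Complex.conj_ofReal lam)
      (by exact_mod_cast hlam.ne') hs hx, sub_neg,
    EuclideanSpace.star_dotProduct_self, EuclideanSpace.star_dotProduct_self] at hpos
  simp only [← RCLike.ofReal_eq_complex_ofReal] at hpos
  have hsq : lam⁻¹ * ‖WithLp.toLp 2 (C *ᵥ x)‖ ^ 2 < lam * ‖WithLp.toLp 2 u‖ ^ 2 := by
    exact_mod_cast hpos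
  rw [hTu]
  refine lt_of_pow_lt_pow_left₀ 2 (by positivity) ?_
  calc ‖WithLp.toLp 2 (C *ᵥ x)‖ ^ 2 = lam * (lam⁻¹ * ‖WithLp.toLp 2 (C *ᵥ x)‖ ^ 2) := by
        field_simp
    _ < lam * (lam * ‖WithLp.toLp 2 u‖ ^ 2) := by gcongr
    _ = (lam * ‖WithLp.toLp 2 u‖) ^ 2 := by ring

end BoundedReal

/-- Bounded-real lemma direction: if `N` is Hurwitz, `P ≻ 0`, and the block matrix
`[[NᵀP + PN, −P M D_a, C̄_aᵀ], [−(M D_a)ᵀ P, −λI, 0], [C̄_a, 0, −λI]]` is negative definite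
for some `λ > 0`, then `σ_max(−C̄_a (iμ I − N)⁻¹ M D_a) < λ` for every frequency `μ ∈ ℝ`. -/
theorem bounded_real_lemma_hinf {n p q : ℕ}
    (N : Matrix (Fin n) (Fin n) ℝ)
    (hHurwitz : ∀ μ : ℂ, μ ∈ spectrum ℂ (N.map (Complex.ofReal ·)) → μ.re < 0)
    (P : Matrix (Fin n) (Fin n) ℝ) (hP : P.PosDef)
    (MDa : Matrix (Fin n) (Fin p) ℝ) (Ca : Matrix (Fin q) (Fin n) ℝ)
    (lam : ℝ) (hlam : 0 < lam)
    (hLMI : (-(Matrix.fromBlocks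
        (Matrix.fromBlocks (Nᵀ * P + P * N) (-(P * MDa)) (-(P * MDa))ᵀ
          (-(lam • (1 : Matrix (Fin p) (Fin p) ℝ))))
        (Matrix.fromRows Caᵀ 0)
        (Matrix.fromCols Ca 0)
        (-(lam • (1 : Matrix (Fin q) (Fin q) ℝ))))).PosDef) :
    ∀ μ : ℝ,
      specNormC (-(Ca.map (Complex.ofReal ·)) *
          ((Complex.I * μ) • (1 : Matrix (Fin n) (Fin n) ℂ) - N.map (Complex.ofReal ·))⁻¹ *
          MDa.map (Complex.ofReal ·)) < lam := by
  intro μ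
  have hLMIℂ := (show (-boundedRealMatrix N P MDa Ca lam).PosDef from hLMI).map_ofReal
  rw [Matrix.map_neg _ fun _ ↦ Complex.ofReal_neg _,
    show Complex.ofReal = ⇑Complex.ofRealHom from rfl,
    boundedRealMatrix_map Complex.ofRealHom fun _ ↦ (Complex.conj_ofReal _).symm] at hLMIℂ
  have hs : star (Complex.I * μ) = -(Complex.I * μ) := by simp
  have hsN : Complex.I * μ ∉ spectrum ℂ (N.map (Complex.ofReal ·)) := fun h ↦ by
    simpa using hHurwitz _ h
  refine ContinuousLinearMap.opNorm_lt_of_forall_norm_apply_lt _ hlam fun u hu ↦ ?_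
  exact norm_transferMatrix_mulVec_lt hP.map_ofReal.isHermitian.eq hlam hLMIℂ hs hsN
    (u := WithLp.ofLp u) (by simpa using hu)
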